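/- arXiv:2305.14234 — 4 statements merged into one kernel-verified Lean document; each statement's English description precedes it below -/
import Mathlib

section
/- For all natural numbers k and l, the Hermite polynomials satisfy the orthogonality relation ∫_ℝ h_k(v) h_l(v) e^{-v²/2} dv = 0 when k ≠ l, and ∫_ℝ h_k(v)² e^{-v²/2} dv = k! √(2π). -/
open MeasureTheory Real

/-- The `k`-th (probabilists') Hermite polynomial,
`h_k(v) = (-1)^k e^{v²/2} (d/dv)^k e^{-v²/2}`. -/
noncomputable def hermiteFun (k : ℕ) (v : ℝ) : ℝ :=
  (-1 : ℝ) ^ k * Real.exp (v ^ 2 / 2) * iteratedDeriv k (fun w => Real.exp (-w ^ 2 / 2)) v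

namespace HermiteAux

open Polynomial Filter

/-- The standard Gaussian weight. -/
noncomputable def G (x : ℝ) : ℝ := Real.exp (-(x ^ 2 / 2))

lemma integrable_pow_mul_G (n : ℕ) : Integrable (fun x : ℝ => x ^ n * G x) := by
  have h := integrable_rpow_mul_exp_neg_mul_sq (b := (1 : ℝ) / 2) (by norm_num)
    (s := (n : ℝ)) (lt_of_lt_of_le neg_one_lt_zero (Nat.cast_nonneg n))
  simp only [Real.rpow_natCast] at h
  refine h.congr ?_
  filter_upwards with x
  simp only [G]
  rw [show -(1 / 2 : ℝ) * x ^ 2 = -(x ^ 2 / 2) by ring]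

lemma integrable_poly_mul_G (p : ℤ[X]) :
    Integrable (fun x : ℝ => (aeval x p : ℝ) * G x) := by
  induction p using Polynomial.induction_on' with
  | add p q hp hq => simpa [add_mul, Pi.add_def] using hp.add hq
  | monomial n a =>
      have := (integrable_pow_mul_G n).const_mul (a : ℝ)
      refine this.congr ?_
      filter_upwards with x
      simp [aeval_monomial, mul_assoc]

lemma hasDerivAt_F (q : ℤ[X]) (x : ℝ) :
    HasDerivAt (fun x : ℝ => (aeval x q : ℝ) * G x)
      ((aeval x (derivative q - X * q) : ℝ) * G x) x := by
  have h1 : HasDerivAt (fun x : ℝ => (aeval x q : ℝ)) (aeval x (derivative q)) x :=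
    q.hasDerivAt_aeval x
  have h2 : HasDerivAt G (-x * G x) x := by
    have h3 : HasDerivAt (fun x : ℝ => -(x ^ 2 / 2)) (-x) x := by
      simpa using ((hasDerivAt_pow 2 x).div_const 2).fun_neg
    unfold G
    simpa [G, mul_comm] using h3.exp
  refine (h1.fun_mul h2).congr_deriv ?_
  simp only [map_sub, map_mul, aeval_X]
  ring

set_option maxHeartbeats 1000000 in
lemma step (p : ℤ[X]) (n : ℕ) :
    ∫ x : ℝ, (aeval x p : ℝ) * ((aeval x (hermite (n + 1)) : ℝ) * G x)
      = ∫ x : ℝ, (aeval x (derivative p) : ℝ) * ((aeval x (hermite n) : ℝ) * G x) := by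
  have key : ∀ r s : ℤ[X], Integrable
      (fun x : ℝ => (aeval x r : ℝ) * ((aeval x s : ℝ) * G x)) := by
    intro r s
    refine (integrable_poly_mul_G (r * s)).congr ?_
    filter_upwards with x
    simp [map_mul, mul_assoc]
  have h := integral_mul_deriv_eq_deriv_mul_of_integrable
    (u := fun x : ℝ => (aeval x p : ℝ))
    (v := fun x : ℝ => (aeval x (hermite n) : ℝ) * G x)
    (u' := fun x : ℝ => (aeval x (derivative p) : ℝ))
    (v' := fun x : ℝ => (aeval x (derivative (hermite n) - X * hermite n) : ℝ) * G x)
    (fun x _ => p.hasDerivAt_aeval x) (fun x _ => hasDerivAt_F _ x)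
    (key p _) (key _ _) (key p _)
  have hs : (derivative (hermite n) - X * hermite n : ℤ[X]) = -(hermite (n + 1)) := by
    rw [hermite_succ]; ring
  rw [hs] at h
  simp only [map_neg, neg_mul, mul_neg, integral_neg] at h
  linarith [h]

lemma iter (p : ℤ[X]) (n : ℕ) :
    ∫ x : ℝ, (aeval x p : ℝ) * ((aeval x (hermite n) : ℝ) * G x)
      = ∫ x : ℝ, (aeval x (derivative^[n] p) : ℝ) * G x := by
  induction n generalizing p with
  | zero => simp [hermite_zero]
  | succ n ih =>
      rw [step p n, ih (derivative p), Function.iterate_succ_apply]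

lemma hermiteFun_eq (k : ℕ) (v : ℝ) : hermiteFun k v = (aeval v (hermite k) : ℝ) := by
  rw [hermiteFun]
  have h0 : (fun w : ℝ => Real.exp (-w ^ 2 / 2))
      = fun w : ℝ => Real.exp (-(w ^ 2 / 2)) := by
    funext w; rw [neg_div]
  rw [h0, iteratedDeriv_eq_iterate, Polynomial.deriv_gaussian_eq_hermite_mul_gaussian]
  have h1 : ((-1 : ℝ) ^ k) * ((-1 : ℝ) ^ k) = 1 := by
    rw [← pow_add, Even.neg_one_pow ⟨k, rfl⟩]
  have h2 : Real.exp (v ^ 2 / 2) * Real.exp (-(v ^ 2 / 2)) = 1 := by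
    rw [← Real.exp_add]; simp
  calc (-1 : ℝ) ^ k * Real.exp (v ^ 2 / 2)
        * ((-1 : ℝ) ^ k * (aeval v (hermite k) : ℝ) * Real.exp (-(v ^ 2 / 2)))
      = ((-1 : ℝ) ^ k * (-1 : ℝ) ^ k)
        * (Real.exp (v ^ 2 / 2) * Real.exp (-(v ^ 2 / 2)))
        * (aeval v (hermite k) : ℝ) := by ring
    _ = (aeval v (hermite k) : ℝ) := by rw [h1, h2]; ring

lemma iterate_derivative_hermite_self (k : ℕ) :
    derivative^[k] (hermite k) = C ((k.factorial : ℤ)) := by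
  have hd : (derivative^[k] (hermite k)).natDegree = 0 := by
    have := natDegree_iterate_derivative (hermite k) k
    rw [natDegree_hermite] at this
    omega
  rw [Polynomial.eq_C_of_natDegree_eq_zero hd, coeff_iterate_derivative]
  simp [coeff_hermite_self, Nat.descFactorial_self]

lemma integral_G : ∫ x : ℝ, G x = Real.sqrt (2 * Real.pi) := by
  have h := integral_gaussian (1 / 2 : ℝ)
  have h1 : ∀ x : ℝ, Real.exp (-(1 / 2 : ℝ) * x ^ 2) = G x := by
    intro x; unfold G; ring_nf
  simp only [h1] at h
  rw [h, show Real.pi / (1 / 2) = 2 * Real.pi by ring]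

lemma main_lt {k l : ℕ} (h : k < l) :
    ∫ v : ℝ, (aeval v (hermite k) : ℝ) * ((aeval v (hermite l) : ℝ) * G v) = 0 := by
  rw [iter]
  have h0 : derivative^[l] (hermite k) = 0 :=
    iterate_derivative_eq_zero (by rwa [natDegree_hermite])
  simp [h0]

end HermiteAux

/-- Orthogonality of the Hermite polynomials with respect to `dμ = e^{-v²/2} dv`:
`∫ h_k h_l dμ = 0` for `k ≠ l`, and `∫ h_k² dμ = k! √(2π)`. -/
theorem hermite_orthogonality (k l : ℕ) :
    (k ≠ l → ∫ v : ℝ, hermiteFun k v * hermiteFun l v * Real.exp (-v ^ 2 / 2) = 0) ∧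
    (∫ v : ℝ, (hermiteFun k v) ^ 2 * Real.exp (-v ^ 2 / 2)
      = (k.factorial : ℝ) * Real.sqrt (2 * Real.pi)) := by
  have hG : ∀ v : ℝ, Real.exp (-v ^ 2 / 2) = HermiteAux.G v := by
    intro v; rw [HermiteAux.G, neg_div]
  constructor
  · intro hkl
    simp only [HermiteAux.hermiteFun_eq, hG]
    rcases Nat.lt_or_ge k l with h | h
    · calc ∫ v : ℝ, (Polynomial.aeval v (Polynomial.hermite k) : ℝ)
            * (Polynomial.aeval v (Polynomial.hermite l) : ℝ) * HermiteAux.G v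
          = ∫ v : ℝ, (Polynomial.aeval v (Polynomial.hermite k) : ℝ)
            * ((Polynomial.aeval v (Polynomial.hermite l) : ℝ) * HermiteAux.G v) := by
              simp only [mul_assoc]
        _ = 0 := HermiteAux.main_lt h
    · have h' : l < k := by omega
      calc ∫ v : ℝ, (Polynomial.aeval v (Polynomial.hermite k) : ℝ)
            * (Polynomial.aeval v (Polynomial.hermite l) : ℝ) * HermiteAux.G v
          = ∫ v : ℝ, (Polynomial.aeval v (Polynomial.hermite l) : ℝ)
            * ((Polynomial.aeval v (Polynomial.hermite k) : ℝ) * HermiteAux.G v) := by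
              congr 1; funext v; ring
        _ = 0 := HermiteAux.main_lt h'
  · simp only [HermiteAux.hermiteFun_eq, hG]
    calc ∫ v : ℝ, (Polynomial.aeval v (Polynomial.hermite k) : ℝ) ^ 2 * HermiteAux.G v
        = ∫ v : ℝ, (Polynomial.aeval v (Polynomial.hermite k) : ℝ)
          * ((Polynomial.aeval v (Polynomial.hermite k) : ℝ) * HermiteAux.G v) := by
            congr 1; funext v; ring
      _ = ∫ v : ℝ, (Polynomial.aeval v
            (Polynomial.derivative^[k] (Polynomial.hermite k)) : ℝ)
            * HermiteAux.G v := HermiteAux.iter _ _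
      _ = ∫ v : ℝ, (k.factorial : ℝ) * HermiteAux.G v := by
            rw [HermiteAux.iterate_derivative_hermite_self]
            simp
      _ = (k.factorial : ℝ) * ∫ v : ℝ, HermiteAux.G v := by
            rw [MeasureTheory.integral_const_mul]
      _ = (k.factorial : ℝ) * Real.sqrt (2 * Real.pi) := by
            rw [HermiteAux.integral_G]
end

section
/- Let d ≥ 1, m ∈ ℕ, U ∈ C^∞(ℝ^d), and for each multi-index α ∈ ℕ^d with |α| ≤ m let c^α ∈ C^∞(ℝ × ℝ^d). Set u_m(t,x,v) := Σ_{|α| ≤ m} c^α(t,x) Ψ_α(v) and let 𝓛 u := Δ_v u - v·∇_v u + ∇_x U(x)·∇_v u - v·∇_x u. Then for all (t,x,v), (∂_t - 𝓛)u_m(t,x,v) = Σ_{|α| ≤ m} ( ∂_t c^α(t,x) + |α| c^α(t,x) ) Ψ_α(v) - Σ_{|α| ≤ m} Σ_{i=1}^d √(α_i) ( -∂_{x_i} c^α(t,x) + (∂_{x_i}U)(x) c^α(t,x) ) Ψ_{α-e_i}(v) + Σ_{|α| ≤ m} Σ_{i=1}^d √(α_i + 1) (∂_{x_i} c^α)(t,x)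 Ψ_{α+e_i}(v), where e_i is the i-th unit multi-index and terms with α_i = 0 in the middle sum are zero. -/
open MeasureTheory Real

/-- Normalizing constant `Z_k = (∫ h_k² e^{-v²/2} dv)^{1/2}`. -/
noncomputable def hermiteZ (k : ℕ) : ℝ :=
  Real.sqrt (∫ v : ℝ, (hermiteFun k v) ^ 2 * Real.exp (-v ^ 2 / 2))

/-- The normalized Hermite functions `ψ_k = h_k / Z_k`. -/
noncomputable def psi (k : ℕ) (v : ℝ) : ℝ := hermiteFun k v / hermiteZ k

/-- Multi-dimensional Hermite functions `Ψ_α(v) = ∏ᵢ ψ_{αᵢ}(vᵢ)`. -/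
noncomputable def PsiM {d : ℕ} (α : Fin d → ℕ) (v : Fin d → ℝ) : ℝ :=
  ∏ i, psi (α i) (v i)

/-- The partial derivative `∂f/∂xᵢ` of a function `f : ℝ^d → ℝ`. -/
noncomputable def pderiv' {d : ℕ} (i : Fin d) (f : (Fin d → ℝ) → ℝ) (x : Fin d → ℝ) : ℝ :=
  deriv (fun t => f (Function.update x i t)) (x i)

/-- The finite set of multi-indices `α ∈ ℕ^d` with `|α| ≤ m`. -/
def degLe (d m : ℕ) : Finset (Fin d → Fin (m + 1)) :=
  Finset.univ.filter (fun α => ∑ i, (α i : ℕ) ≤ m)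

/-- Time derivative `∂_t F` of `F : ℝ × ℝ^d × ℝ^d → ℝ`, `F = F(t,x,v)`. -/
noncomputable def Dt {d : ℕ} (F : ℝ × (Fin d → ℝ) × (Fin d → ℝ) → ℝ)
    (q : ℝ × (Fin d → ℝ) × (Fin d → ℝ)) : ℝ :=
  deriv (fun s => F (s, q.2.1, q.2.2)) q.1

/-- Spatial partial derivative `∂_{xᵢ} F` of `F = F(t,x,v)`. -/
noncomputable def Dx {d : ℕ} (i : Fin d) (F : ℝ × (Fin d → ℝ) × (Fin d → ℝ) → ℝ)
    (q : ℝ × (Fin d → ℝ) × (Fin d → ℝ)) : ℝ :=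
  deriv (fun s => F (q.1, Function.update q.2.1 i s, q.2.2)) (q.2.1 i)

/-- Velocity partial derivative `∂_{vᵢ} F` of `F = F(t,x,v)`. -/
noncomputable def Dv {d : ℕ} (i : Fin d) (F : ℝ × (Fin d → ℝ) × (Fin d → ℝ) → ℝ)
    (q : ℝ × (Fin d → ℝ) × (Fin d → ℝ)) : ℝ :=
  deriv (fun s => F (q.1, q.2.1, Function.update q.2.2 i s)) (q.2.2 i)

/-- Time derivative `∂_t f` of a coefficient `f = f(t,x)`. -/
noncomputable def Dtc {d : ℕ} (f : ℝ × (Fin d → ℝ) → ℝ) (p : ℝ × (Fin d → ℝ)) : ℝ :=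
  deriv (fun s => f (s, p.2)) p.1

/-- Spatial partial derivative `∂_{xᵢ} f` of a coefficient `f = f(t,x)`. -/
noncomputable def Dxc {d : ℕ} (i : Fin d) (f : ℝ × (Fin d → ℝ) → ℝ) (p : ℝ × (Fin d → ℝ)) : ℝ :=
  deriv (fun s => f (p.1, Function.update p.2 i s)) (p.2 i)


open Polynomial

section BrinkmanAux

lemma hermite_derivative (n : ℕ) :
    derivative (hermite (n + 1)) = (n + 1 : ℕ) • hermite n := by
  induction n with
  | zero => simp [hermite_one, hermite_zero]
  | succ n ih =>
    rw [hermite_succ (n+1), derivative_sub, derivative_mul, derivative_X, ih, one_mul,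
      mul_smul_comm, add_sub_assoc, derivative_smul, ← smul_sub, ← hermite_succ n, add_smul, one_smul, add_comm]
    module

noncomputable def Hh (k : ℕ) : ℝ → ℝ := fun x => Polynomial.aeval x (Polynomial.hermite k)

lemma hermiteFun_eq (k : ℕ) (x : ℝ) : hermiteFun k x = Hh k x := by
  unfold hermiteFun Hh
  rw [iteratedDeriv_eq_iterate]
  have h : (fun w : ℝ => Real.exp (-w ^ 2 / 2)) = fun y : ℝ => Real.exp (-(y ^ 2 / 2)) := by
    funext y; ring_nf
  rw [h, Polynomial.deriv_gaussian_eq_hermite_mul_gaussian]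
  rw [show ((-1:ℝ) ^ k * Real.exp (x ^ 2 / 2) * ((-1) ^ k * (Polynomial.aeval x) (Polynomial.hermite k) * Real.exp (-(x ^ 2 / 2)))
      = ((-1:ℝ)^k * (-1)^k) * (Real.exp (x^2/2) * Real.exp (-(x^2/2))) * (Polynomial.aeval x) (Polynomial.hermite k)) by ring]
  rw [← Real.exp_add, ← pow_add]
  simp [← two_mul, pow_mul]

lemma hasDerivAt_Hh (k : ℕ) (x : ℝ) : HasDerivAt (Hh k) ((k : ℝ) * Hh (k - 1) x) x := by
  have h := Polynomial.hasDerivAt_aeval (𝕜 := ℝ) (Polynomial.hermite k) x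
  cases k with
  | zero =>
    unfold Hh
    simp only [Nat.cast_zero, zero_mul]
    simpa using h
  | succ n =>
    unfold Hh
    convert h using 1
    · rfl
    rw [hermite_derivative]
    simp [nsmul_eq_mul]

lemma Hh_rec (k : ℕ) (x : ℝ) : x * Hh k x = Hh (k + 1) x + (k : ℝ) * Hh (k - 1) x := by
  have h : Hh (k+1) x = x * Hh k x - Polynomial.aeval x (Polynomial.derivative (Polynomial.hermite k)) := by
    unfold Hh; rw [Polynomial.hermite_succ]; simp
  cases k with
  | zero => simp [h, Hh]
  | succ n =>
    rw [h, hermite_derivative]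
    simp only [nsmul_eq_mul, map_mul, map_natCast, Hh]
    push_cast
    ring


lemma integrable_pow_gauss (n : ℕ) :
    Integrable (fun x : ℝ => x ^ n * Real.exp (-(x ^ 2 / 2))) := by
  have hg : Integrable (fun x : ℝ => ((n.factorial : ℝ) * Real.exp 1) * Real.exp (-(1/4 : ℝ) * x ^ 2)) :=
    (integrable_exp_neg_mul_sq (by norm_num : (0:ℝ) < 1/4)).const_mul _
  refine hg.mono' ?_ ?_
  · exact (continuous_pow n |>.mul (by continuity)).aestronglyMeasurable
  · refine Filter.Eventually.of_forall fun x => ?_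
    have h1 : |x| ^ n ≤ (n.factorial : ℝ) * Real.exp |x| := by
      have hs := Real.sum_le_exp_of_nonneg (abs_nonneg x) (n + 1)
      have hterm : |x| ^ n / (n.factorial : ℝ) ≤ ∑ i ∈ Finset.range (n+1), |x| ^ i / i.factorial := by
        refine Finset.single_le_sum (f := fun i => |x| ^ i / (i.factorial : ℝ)) ?_ (Finset.self_mem_range_succ n)
        intro i _
        positivity
      have hf : (0:ℝ) < n.factorial := by positivity
      calc |x| ^ n = (n.factorial : ℝ) * (|x| ^ n / n.factorial) := by field_simp
        _ ≤ (n.factorial : ℝ) * Real.exp |x| := by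
            exact mul_le_mul_of_nonneg_left (hterm.trans hs) hf.le
    have h2 : Real.exp |x| * Real.exp (-(x ^ 2 / 2)) ≤ Real.exp 1 * Real.exp (-(1/4:ℝ) * x ^ 2) := by
      rw [← Real.exp_add, ← Real.exp_add]
      apply Real.exp_le_exp.mpr
      nlinarith [sq_nonneg (|x| - 2), sq_abs x]
    have hxn : ‖x ^ n * Real.exp (-(x ^ 2 / 2))‖ = |x| ^ n * Real.exp (-(x ^ 2 / 2)) := by
      rw [norm_mul, norm_pow, Real.norm_eq_abs, Real.norm_eq_abs, Real.abs_exp]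
    rw [hxn]
    calc |x| ^ n * Real.exp (-(x ^ 2 / 2))
        ≤ ((n.factorial : ℝ) * Real.exp |x|) * Real.exp (-(x ^ 2 / 2)) := by
          apply mul_le_mul_of_nonneg_right h1 (Real.exp_nonneg _)
      _ = (n.factorial : ℝ) * (Real.exp |x| * Real.exp (-(x ^ 2 / 2))) := by ring
      _ ≤ (n.factorial : ℝ) * (Real.exp 1 * Real.exp (-(1/4:ℝ) * x ^ 2)) := by
          exact mul_le_mul_of_nonneg_left h2 (by positivity)
      _ = (n.factorial : ℝ) * Real.exp 1 * Real.exp (-(1/4:ℝ) * x ^ 2) := by ring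

lemma integrable_poly_gauss (p : Polynomial ℤ) :
    Integrable (fun x : ℝ => (Polynomial.aeval x p) * Real.exp (-(x ^ 2 / 2))) := by
  have : ∀ x : ℝ, (Polynomial.aeval x p) * Real.exp (-(x ^ 2 / 2))
      = ∑ i ∈ Finset.range (p.natDegree + 1),
          ((p.coeff i : ℝ)) * (x ^ i * Real.exp (-(x ^ 2 / 2))) := by
    intro x
    rw [Polynomial.aeval_def, Polynomial.eval₂_eq_eval_map, Polynomial.eval_eq_sum_range]
    rw [Finset.sum_mul]
    rw [Polynomial.natDegree_map_eq_of_injective (algebraMap ℤ ℝ).injective_int]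
    refine Finset.sum_congr rfl fun i _ => ?_
    rw [Polynomial.coeff_map]
    simp only [eq_intCast, Int.cast_id, algebraMap_int_eq]
    push_cast
    ring
  simp only [this]
  exact integrable_finset_sum _ fun i _ => ((integrable_pow_gauss i).const_mul _)


noncomputable def Zsq (k : ℕ) : ℝ := ∫ x : ℝ, (Hh k x) ^ 2 * Real.exp (-(x ^ 2 / 2))

lemma hasDerivAt_gauss (x : ℝ) :
    HasDerivAt (fun y : ℝ => Real.exp (-(y ^ 2 / 2))) (-x * Real.exp (-(x ^ 2 / 2))) x := by
  have h1 : HasDerivAt (fun y : ℝ => -(y ^ 2 / 2)) (-x) x := by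
    have := (hasDerivAt_pow 2 x).div_const 2
    have := this.neg
    convert this using 1
    · rfl
    · rfl
    · rfl
    push_cast
    ring
  have h2 := h1.exp
  convert h2 using 1
  ring

lemma Zsq_succ (k : ℕ) : Zsq (k + 1) = ((k : ℝ) + 1) * Zsq k := by
  set u : ℝ → ℝ := Hh (k + 1)
  set u' : ℝ → ℝ := fun x => ((k : ℝ) + 1) * Hh k x
  set v : ℝ → ℝ := fun x => Hh k x * Real.exp (-(x ^ 2 / 2))
  set v' : ℝ → ℝ := fun x => -(Hh (k + 1) x * Real.exp (-(x ^ 2 / 2)))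
  have hu : ∀ x, HasDerivAt u (u' x) x := by
    intro x
    have := hasDerivAt_Hh (k + 1) x
    simpa [u, u'] using this
  have hv : ∀ x, HasDerivAt v (v' x) x := by
    intro x
    have := (hasDerivAt_Hh k x).mul (hasDerivAt_gauss x)
    convert this using 1
    · rfl
    · rfl
    · rfl
    have := Hh_rec k x
    simp only [v']
    linear_combination Real.exp (-(x ^ 2 / 2)) * this
  have huv' : Integrable (u * v') := by
    have := (integrable_poly_gauss (Polynomial.hermite (k+1) * Polynomial.hermite (k+1))).neg
    refine this.congr (Filter.Eventually.of_forall fun x => ?_)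
    simp only [Pi.mul_apply, Pi.neg_apply, map_mul, u, v']
    show -(aeval x (hermite (k+1)) * aeval x (hermite (k+1)) * _) = _
    simp only [Hh]
    ring
  have hu'v : Integrable (u' * v) := by
    have := (integrable_poly_gauss (Polynomial.hermite k * Polynomial.hermite k)).const_mul ((k:ℝ)+1)
    refine this.congr (Filter.Eventually.of_forall fun x => ?_)
    simp only [Pi.mul_apply, map_mul, u', v]
    simp only [Hh]
    ring
  have huv : Integrable (u * v) := by
    have := integrable_poly_gauss (Polynomial.hermite (k+1) * Polynomial.hermite k)
    refine this.congr (Filter.Eventually.of_forall fun x => ?_)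
    simp only [Pi.mul_apply, map_mul, u, v]
    simp only [Hh]
    ring
  have := MeasureTheory.integral_mul_deriv_eq_deriv_mul_of_integrable (fun x _ => hu x) (fun x _ => hv x) huv' hu'v huv
  unfold Zsq
  have hL : ∫ x : ℝ, u x * v' x = -∫ x : ℝ, Hh (k+1) x ^ 2 * Real.exp (-(x^2/2)) := by
    rw [← integral_neg]
    congr 1; funext x; simp only [u, v']; ring
  have hR : ∫ x : ℝ, u' x * v x = ((k:ℝ)+1) * ∫ x : ℝ, Hh k x ^ 2 * Real.exp (-(x^2/2)) := by
    rw [← integral_const_mul]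
    congr 1; funext x; simp only [u', v]; ring
  rw [hL, hR] at this
  linarith [this]

lemma Hh_zero (x : ℝ) : Hh 0 x = 1 := by simp [Hh]

lemma Zsq_zero : Zsq 0 = Real.sqrt (2 * Real.pi) := by
  unfold Zsq
  have : ∀ x : ℝ, (Hh 0 x) ^ 2 * Real.exp (-(x ^ 2 / 2)) = Real.exp (-(1/2 : ℝ) * x ^ 2) := by
    intro x; rw [Hh_zero]; ring_nf
  simp only [this]
  rw [integral_gaussian]
  norm_num [mul_comm]

lemma Zsq_pos (k : ℕ) : 0 < Zsq k := by
  induction k with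
  | zero => rw [Zsq_zero]; positivity
  | succ n ih => rw [Zsq_succ]; positivity


lemma hermiteZ_eq (k : ℕ) : hermiteZ k = Real.sqrt (Zsq k) := by
  unfold hermiteZ Zsq
  congr 1
  congr 1
  funext x
  rw [hermiteFun_eq, neg_div]

lemma hermiteZ_pos (k : ℕ) : 0 < hermiteZ k := by
  rw [hermiteZ_eq]; exact Real.sqrt_pos.mpr (Zsq_pos k)

lemma hermiteZ_succ (k : ℕ) : hermiteZ (k + 1) = Real.sqrt ((k : ℝ) + 1) * hermiteZ k := by
  rw [hermiteZ_eq, hermiteZ_eq, Zsq_succ, Real.sqrt_mul (by positivity)]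

lemma psi_eq (k : ℕ) (x : ℝ) : psi k x = Hh k x / hermiteZ k := by
  rw [psi, hermiteFun_eq]

lemma hasDerivAt_psi (k : ℕ) (x : ℝ) :
    HasDerivAt (psi k) (Real.sqrt k * psi (k - 1) x) x := by
  have hfun : psi k = fun y => Hh k y / hermiteZ k := by
    funext y; exact psi_eq k y
  rw [hfun]
  have h := (hasDerivAt_Hh k x).div_const (hermiteZ k)
  convert h using 1
  · rfl
  · rfl
  rw [psi_eq]
  cases k with
  | zero => simp
  | succ n =>
    rw [hermiteZ_succ]
    have h1 : (0:ℝ) < hermiteZ n := hermiteZ_pos n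
    have h2 : (0:ℝ) < Real.sqrt ((n:ℝ)+1) := by positivity
    have h3 : Real.sqrt ((n:ℝ)+1) * Real.sqrt ((n:ℝ)+1) = (n:ℝ)+1 :=
      Real.mul_self_sqrt (by positivity)
    push_cast
    field_simp
    linear_combination Hh n x * h3

lemma psi_rec (k : ℕ) (x : ℝ) :
    x * psi k x = Real.sqrt ((k : ℝ) + 1) * psi (k + 1) x + Real.sqrt k * psi (k - 1) x := by
  have hrec := Hh_rec k x
  rw [psi_eq, psi_eq, psi_eq]
  have hZ : (0:ℝ) < hermiteZ k := hermiteZ_pos k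
  have hZ1 : hermiteZ (k+1) = Real.sqrt ((k:ℝ)+1) * hermiteZ k := hermiteZ_succ k
  have h3 : Real.sqrt ((k:ℝ)+1) * Real.sqrt ((k:ℝ)+1) = (k:ℝ)+1 :=
    Real.mul_self_sqrt (by positivity)
  cases k with
  | zero =>
    simp only [Nat.cast_zero, Real.sqrt_zero, zero_mul, add_zero, zero_add] at *
    rw [hZ1]
    field_simp
    nlinarith [hrec]
  | succ n =>
    have hZn : (0:ℝ) < hermiteZ n := hermiteZ_pos n
    have hZs : hermiteZ (n+1) = Real.sqrt ((n:ℝ)+1) * hermiteZ n := hermiteZ_succ n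
    have h4 : Real.sqrt ((n:ℝ)+1) * Real.sqrt ((n:ℝ)+1) = (n:ℝ)+1 :=
      Real.mul_self_sqrt (by positivity)
    simp only [Nat.add_sub_cancel]
    push_cast at hrec ⊢
    have key : x * (Hh (n+1) x / hermiteZ (n+1))
        = Hh (n+2) x / hermiteZ (n+1) + ((n:ℝ)+1) * Hh n x / hermiteZ (n+1) := by
      rw [mul_div_assoc', hrec]
      push_cast
      ring
    rw [key]
    congr 1
    · rw [hZ1]
      have hs : Real.sqrt ((n:ℝ)+1+1) ≠ 0 := by positivity
      have hz : hermiteZ (n+1) ≠ 0 := hZ.ne'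
      push_cast
      field_simp
    · rw [hZs]
      have hs : Real.sqrt ((n:ℝ)+1) ≠ 0 := by positivity
      field_simp
      linear_combination (-1 : ℝ) * Hh n x * h4



lemma psi_ou (k : ℕ) (x : ℝ) :
    Real.sqrt k * (Real.sqrt ((k - 1 : ℕ)) * psi (k - 1 - 1) x)
      - x * (Real.sqrt k * psi (k - 1) x) = -(k : ℝ) * psi k x := by
  cases k with
  | zero => simp
  | succ j =>
    simp only [Nat.add_sub_cancel]
    have h3 : Real.sqrt ((j:ℝ)+1) * Real.sqrt ((j:ℝ)+1) = (j:ℝ)+1 :=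
      Real.mul_self_sqrt (by positivity)
    push_cast
    linear_combination (-Real.sqrt ((j:ℝ)+1)) * psi_rec j x - psi (j+1) x * h3

section
variable {d : ℕ}

lemma PsiM_split (β : Fin d → ℕ) (v : Fin d → ℝ) (i : Fin d) :
    PsiM β v = psi (β i) (v i) * ∏ j ∈ Finset.univ.erase i, psi (β j) (v j) :=
  (Finset.mul_prod_erase Finset.univ _ (Finset.mem_univ i)).symm

lemma hasDerivAt_PsiM (α : Fin d → ℕ) (i : Fin d) (v : Fin d → ℝ) :
    HasDerivAt (fun s => PsiM α (Function.update v i s))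
      (Real.sqrt (α i) * PsiM (fun j => α j - if j = i then 1 else 0) v) (v i) := by
  have hfun : (fun s => PsiM α (Function.update v i s))
      = fun s => psi (α i) s * (∏ j ∈ Finset.univ.erase i, psi (α j) (v j)) := by
    funext s
    rw [PsiM_split α _ i, Function.update_self]
    congr 1
    refine Finset.prod_congr rfl fun j hj => ?_
    rw [Function.update_of_ne (Finset.mem_erase.mp hj).1]
  rw [hfun]
  have h := (hasDerivAt_psi (α i) (v i)).mul_const
    (∏ j ∈ Finset.univ.erase i, psi (α j) (v j))
  convert h using 1
  · rfl
  · rfl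
  rw [PsiM_split _ v i]
  simp only [if_pos rfl, if_true]
  have : (∏ j ∈ Finset.univ.erase i, psi (α j - if j = i then 1 else 0) (v j))
      = ∏ j ∈ Finset.univ.erase i, psi (α j) (v j) := by
    refine Finset.prod_congr rfl fun j hj => ?_
    simp [(Finset.mem_erase.mp hj).1]
  rw [this]
  ring

lemma PsiM_rec (α : Fin d → ℕ) (i : Fin d) (v : Fin d → ℝ) :
    v i * PsiM α v
      = Real.sqrt ((α i : ℝ) + 1) * PsiM (fun j => α j + if j = i then 1 else 0) v
        + Real.sqrt (α i) * PsiM (fun j => α j - if j = i then 1 else 0) v := by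
  rw [PsiM_split α v i, PsiM_split _ v i, PsiM_split _ v i]
  have e1 : (∏ j ∈ Finset.univ.erase i, psi (α j + if j = i then 1 else 0) (v j))
      = ∏ j ∈ Finset.univ.erase i, psi (α j) (v j) := by
    refine Finset.prod_congr rfl fun j hj => ?_
    simp [(Finset.mem_erase.mp hj).1]
  have e2 : (∏ j ∈ Finset.univ.erase i, psi (α j - if j = i then 1 else 0) (v j))
      = ∏ j ∈ Finset.univ.erase i, psi (α j) (v j) := by
    refine Finset.prod_congr rfl fun j hj => ?_
    simp [(Finset.mem_erase.mp hj).1]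
  rw [e1, e2]
  simp only [if_pos rfl, if_true]
  linear_combination (∏ j ∈ Finset.univ.erase i, psi (α j) (v j)) * psi_rec (α i) (v i)

lemma PsiM_ou (α : Fin d → ℕ) (i : Fin d) (v : Fin d → ℝ) :
    Real.sqrt (α i) * (Real.sqrt ((α i - 1 : ℕ))
        * PsiM (fun j => (α j - if j = i then 1 else 0) - if j = i then 1 else 0) v)
      - v i * (Real.sqrt (α i) * PsiM (fun j => α j - if j = i then 1 else 0) v)
      = -(α i : ℝ) * PsiM α v := by
  rw [PsiM_split α v i, PsiM_split _ v i, PsiM_split _ v i]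
  have e1 : (∏ j ∈ Finset.univ.erase i, psi ((α j - if j = i then 1 else 0) - if j = i then 1 else 0) (v j))
      = ∏ j ∈ Finset.univ.erase i, psi (α j) (v j) := by
    refine Finset.prod_congr rfl fun j hj => ?_
    simp [(Finset.mem_erase.mp hj).1]
  have e2 : (∏ j ∈ Finset.univ.erase i, psi (α j - if j = i then 1 else 0) (v j))
      = ∏ j ∈ Finset.univ.erase i, psi (α j) (v j) := by
    refine Finset.prod_congr rfl fun j hj => ?_
    simp [(Finset.mem_erase.mp hj).1]
  rw [e1, e2]
  simp only [if_pos rfl, if_true]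
  linear_combination (∏ j ∈ Finset.univ.erase i, psi (α j) (v j)) * psi_ou (α i) (v i)

end

end BrinkmanAux

/-- Applying `∂_t - 𝓛`, with `𝓛u = Δ_v u - v·∇_v u + ∇_x U·∇_v u - v·∇_x u`, to the
Hermite ansatz `u_m(t,x,v) = Σ_{|α| ≤ m} c^α(t,x) Ψ_α(v)` yields the Brinkman hierarchy
expansion. Here `e_i` is the `i`-th unit multi-index and multi-index subtraction is
truncated (the terms with `αᵢ = 0` in the middle sum carry the factor `√0 = 0`). -/
theorem ansatz_brinkman_expansion (d m : ℕ) (hd : 1 ≤ d)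
    (U : (Fin d → ℝ) → ℝ) (hU : ContDiff ℝ (⊤ : ℕ∞) U)
    (c : (Fin d → Fin (m + 1)) → ℝ × (Fin d → ℝ) → ℝ)
    (hc : ∀ α, ContDiff ℝ (⊤ : ℕ∞) (c α))
    (t : ℝ) (x v : Fin d → ℝ) :
    (fun um : ℝ × (Fin d → ℝ) × (Fin d → ℝ) → ℝ =>
      Dt um (t, x, v)
        - ((∑ i, Dv i (fun q => Dv i um q) (t, x, v))
            - (∑ i, v i * Dv i um (t, x, v))
            + (∑ i, pderiv' i U x * Dv i um (t, x, v))
            - (∑ i, v i * Dx i um (t, x, v))))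
      (fun q => ∑ α ∈ degLe d m, c α (q.1, q.2.1) * PsiM (fun j => (α j : ℕ)) q.2.2)
    = (∑ α ∈ degLe d m,
        (Dtc (c α) (t, x) + (∑ i, ((α i : ℕ) : ℝ)) * c α (t, x))
          * PsiM (fun j => (α j : ℕ)) v)
      - (∑ α ∈ degLe d m, ∑ i,
          Real.sqrt ((α i : ℕ)) * (-(Dxc i (c α) (t, x)) + pderiv' i U x * c α (t, x))
            * PsiM (fun j => (α j : ℕ) - (if j = i then 1 else 0)) v)
      + (∑ α ∈ degLe d m, ∑ i,
          Real.sqrt ((α i : ℕ) + 1) * Dxc i (c α) (t, x)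
            * PsiM (fun j => (α j : ℕ) + (if j = i then 1 else 0)) v) := by
  classical
  have hcd : ∀ α, Differentiable ℝ (c α) := fun α => (hc α).differentiable (by simp)
  have hup : ∀ (w : Fin d → ℝ) (i : Fin d), Differentiable ℝ (fun s : ℝ => Function.update w i s) := by
    intro w i
    apply differentiable_pi.mpr
    intro j
    by_cases h : j = i
    · simpa [Function.update_apply, h] using differentiable_id
    · simpa [Function.update_apply, h] using (differentiable_const (w j) : Differentiable ℝ _)
  -- time derivative
  have hDt : Dt (fun q : ℝ × (Fin d → ℝ) × (Fin d → ℝ) => ∑ α ∈ degLe d m, c α (q.1, q.2.1) * PsiM (fun j => (α j : ℕ)) q.2.2) (t, x, v)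
      = ∑ α ∈ degLe d m, Dtc (c α) (t, x) * PsiM (fun j => (α j : ℕ)) v := by
    have hdt : ∀ α : Fin d → Fin (m+1), DifferentiableAt ℝ (fun s => c α (s, x)) t := by
      intro α
      exact (((hcd α).comp (differentiable_fun_id.prodMk (differentiable_const x)))) t
    show deriv (fun s => ∑ α ∈ degLe d m, c α (s, x) * PsiM (fun j => (α j : ℕ)) v) t = _
    exact (HasDerivAt.fun_sum fun α _ =>
      ((hdt α).hasDerivAt.mul_const (PsiM (fun j => (α j : ℕ)) v))).deriv
  -- space derivative
  have hDx : ∀ i : Fin d, Dx i (fun q : ℝ × (Fin d → ℝ) × (Fin d → ℝ) => ∑ α ∈ degLe d m, c α (q.1, q.2.1) * PsiM (fun j => (α j : ℕ)) q.2.2) (t, x, v)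
      = ∑ α ∈ degLe d m, Dxc i (c α) (t, x) * PsiM (fun j => (α j : ℕ)) v := by
    intro i
    have hdx : ∀ α : Fin d → Fin (m+1),
        DifferentiableAt ℝ (fun s => c α (t, Function.update x i s)) (x i) := by
      intro α
      exact ((hcd α).comp ((differentiable_const t).prodMk (hup x i))) (x i)
    show deriv (fun s => ∑ α ∈ degLe d m, c α (t, Function.update x i s)
        * PsiM (fun j => (α j : ℕ)) v) (x i) = _
    exact (HasDerivAt.fun_sum fun α _ =>
      ((hdx α).hasDerivAt.mul_const (PsiM (fun j => (α j : ℕ)) v))).deriv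
  -- velocity derivative, as a function
  have hDvp : ∀ (i : Fin d) (q : ℝ × (Fin d → ℝ) × (Fin d → ℝ)), Dv i (fun q : ℝ × (Fin d → ℝ) × (Fin d → ℝ) => ∑ α ∈ degLe d m, c α (q.1, q.2.1) * PsiM (fun j => (α j : ℕ)) q.2.2) q
      = ∑ α ∈ degLe d m, c α (q.1, q.2.1) * (Real.sqrt ((α i : ℕ))
          * PsiM (fun j => (α j : ℕ) - if j = i then 1 else 0) q.2.2) := by
    intro i q
    show deriv (fun s => ∑ α ∈ degLe d m, c α (q.1, q.2.1)
        * PsiM (fun j => (α j : ℕ)) (Function.update q.2.2 i s)) (q.2.2 i) = _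
    exact (HasDerivAt.fun_sum fun α _ =>
      ((hasDerivAt_PsiM (fun j => (α j : ℕ)) i q.2.2).const_mul (c α (q.1, q.2.1)))).deriv
  -- second velocity derivative at the point
  have hDvv : ∀ i : Fin d, Dv i (fun q => Dv i (fun q : ℝ × (Fin d → ℝ) × (Fin d → ℝ) => ∑ α ∈ degLe d m, c α (q.1, q.2.1) * PsiM (fun j => (α j : ℕ)) q.2.2) q) (t, x, v)
      = ∑ α ∈ degLe d m, (c α (t, x) * Real.sqrt ((α i : ℕ)))
          * (Real.sqrt ((((α i : ℕ) - if i = i then 1 else 0 : ℕ)) : ℝ)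
            * PsiM (fun j => ((α j : ℕ) - if j = i then 1 else 0) - if j = i then 1 else 0) v) := by
    intro i
    have hre : (fun q : ℝ × (Fin d → ℝ) × (Fin d → ℝ) => Dv i (fun q : ℝ × (Fin d → ℝ) × (Fin d → ℝ) => ∑ α ∈ degLe d m, c α (q.1, q.2.1) * PsiM (fun j => (α j : ℕ)) q.2.2) q)
        = fun q => ∑ α ∈ degLe d m, (c α (q.1, q.2.1) * Real.sqrt ((α i : ℕ)))
            * PsiM (fun j => (α j : ℕ) - if j = i then 1 else 0) q.2.2 := by
      funext q
      rw [hDvp i q]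
      exact Finset.sum_congr rfl fun α _ => by ring
    rw [hre]
    show deriv (fun s => ∑ α ∈ degLe d m, (c α (t, x) * Real.sqrt ((α i : ℕ)))
        * PsiM (fun j => (α j : ℕ) - if j = i then 1 else 0) (Function.update v i s)) (v i) = _
    exact (HasDerivAt.fun_sum fun α _ =>
      ((hasDerivAt_PsiM (fun j => (α j : ℕ) - if j = i then 1 else 0) i v).const_mul
        (c α (t, x) * Real.sqrt ((α i : ℕ))))).deriv
  beta_reduce
  rw [hDt]
  simp only [hDvv]
  simp only [hDvp]
  simp only [hDx]
  simp only [Finset.mul_sum]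
  -- expand the first sum on the RHS
  have expand1 : (∑ α ∈ degLe d m,
        (Dtc (c α) (t, x) + (∑ i, ((α i : ℕ) : ℝ)) * c α (t, x))
          * PsiM (fun j => (α j : ℕ)) v)
      = (∑ α ∈ degLe d m, Dtc (c α) (t, x) * PsiM (fun j => (α j : ℕ)) v)
        + ∑ i, ∑ α ∈ degLe d m, ((α i : ℕ) : ℝ) * c α (t, x) * PsiM (fun j => (α j : ℕ)) v := by
    rw [Finset.sum_comm, ← Finset.sum_add_distrib]
    refine Finset.sum_congr rfl fun α _ => ?_
    rw [add_mul, Finset.sum_mul, Finset.sum_mul]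
  rw [expand1]
  have hmid : (∑ α ∈ degLe d m, ∑ i,
        Real.sqrt ((α i : ℕ)) * (-(Dxc i (c α) (t, x)) + pderiv' i U x * c α (t, x))
          * PsiM (fun j => (α j : ℕ) - (if j = i then 1 else 0)) v)
      = ∑ i, ∑ α ∈ degLe d m,
        Real.sqrt ((α i : ℕ)) * (-(Dxc i (c α) (t, x)) + pderiv' i U x * c α (t, x))
          * PsiM (fun j => (α j : ℕ) - (if j = i then 1 else 0)) v := Finset.sum_comm
  have htop : (∑ α ∈ degLe d m, ∑ i,
        Real.sqrt ((α i : ℕ) + 1) * Dxc i (c α) (t, x)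
          * PsiM (fun j => (α j : ℕ) + (if j = i then 1 else 0)) v)
      = ∑ i, ∑ α ∈ degLe d m,
        Real.sqrt ((α i : ℕ) + 1) * Dxc i (c α) (t, x)
          * PsiM (fun j => (α j : ℕ) + (if j = i then 1 else 0)) v := Finset.sum_comm
  rw [hmid, htop]
  rw [← Finset.sum_sub_distrib, ← Finset.sum_add_distrib, ← Finset.sum_sub_distrib]
  rw [add_sub_assoc, add_assoc]
  conv_rhs => rw [← Finset.sum_sub_distrib, ← Finset.sum_add_distrib]
  rw [sub_eq_add_neg, ← Finset.sum_neg_distrib]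
  congr 1
  refine Finset.sum_congr rfl fun i _ => ?_
  rw [neg_sub]
  conv_lhs => rw [← Finset.sum_sub_distrib, ← Finset.sum_add_distrib, ← Finset.sum_sub_distrib]
  conv_rhs => rw [← Finset.sum_sub_distrib, ← Finset.sum_add_distrib]
  refine Finset.sum_congr rfl fun α hα => ?_
  simp only [if_true]
  linear_combination Dxc i (c α) (t, x) * PsiM_rec (fun j => ((α j : ℕ))) i v
    - c α (t, x) * PsiM_ou (fun j => ((α j : ℕ))) i v
end

section
/- Let a > 0, P ∈ C_0^∞(ℝ^d), U(x) := a|x|² + P(x), and let φ_R and U_R := U φ_R be as constructed from a smooth cutoff χ (χ = 1 on (-∞,1], 0 ≤ χ ≤ 1, χ = 0 on [2,∞), φ_R(x) := χ(2|x|/R)). Let Q_R := [-R,R]^d. Then there exist R₀ > 1 and a constant C, both independent of R, such that for all R ≥ R₀: Σ_{z ∈ ℤ^d, z ≠ 0} sup_{x ∈ Q_R} exp( -a|x + 2Rz|² + U_R(x) ) ≤ C. -/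
open MeasureTheory Real

/-- Summability of products of a summable nonnegative function over `Fin d → ℤ`. -/
lemma summable_pi_prod_aux {w : ℤ → ℝ} (hw : Summable w) (h0 : ∀ m, 0 ≤ w m) :
    ∀ d : ℕ, Summable (fun z : Fin d → ℤ => ∏ i, w (z i)) := by
  intro d
  induction d with
  | zero =>
      exact summable_of_finite_support (Set.toFinite _)
  | succ n ih =>
      have h := hw.mul_of_nonneg ih h0 (fun z => Finset.prod_nonneg fun i _ => h0 _)
      apply (Fin.consEquiv (fun _ : Fin (n + 1) => ℤ)).summable_iff.mp
      refine h.congr fun p => ?_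
      simp [Fin.prod_univ_succ, Fin.consEquiv]

/-- With `U(x) = a|x|² + P(x)`, `P ∈ C₀^∞`, `φ_R(x) = χ(2|x|/R)` for a smooth cutoff `χ`,
`U_R = U φ_R`, and `Q_R = [-R,R]^d`, there exist `R₀ > 1` and `C` independent of `R`
such that for `R ≥ R₀`:
`Σ_{z ∈ ℤ^d, z ≠ 0} sup_{x ∈ Q_R} exp(-a|x + 2Rz|² + U_R(x)) ≤ C`. -/
theorem periodization_sum_bound (d : ℕ) (hd : 1 ≤ d) (a : ℝ) (ha : 0 < a)
    (P : EuclideanSpace ℝ (Fin d) → ℝ) (hP : ContDiff ℝ (⊤ : ℕ∞) P) (hPc : HasCompactSupport P)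
    (χ : ℝ → ℝ) (hχ : ContDiff ℝ (⊤ : ℕ∞) χ) (hχ1 : ∀ r : ℝ, r ≤ 1 → χ r = 1)
    (hχ01 : ∀ r : ℝ, 0 ≤ χ r ∧ χ r ≤ 1) (hχ2 : ∀ r : ℝ, 2 ≤ r → χ r = 0) :
    ∃ R₀ C : ℝ, 1 < R₀ ∧ ∀ R, R₀ ≤ R →
      Summable (fun z : {z : Fin d → ℤ // z ≠ 0} =>
        ⨆ x ∈ {x : EuclideanSpace ℝ (Fin d) | ∀ i, |x i| ≤ R},
          Real.exp (-a * ‖x + (EuclideanSpace.equiv (Fin d) ℝ).symm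
                (fun i => 2 * R * (z.1 i : ℝ))‖ ^ 2
            + (a * ‖x‖ ^ 2 + P x) * χ (2 * ‖x‖ / R))) ∧
      (∑' z : {z : Fin d → ℤ // z ≠ 0},
        ⨆ x ∈ {x : EuclideanSpace ℝ (Fin d) | ∀ i, |x i| ≤ R},
          Real.exp (-a * ‖x + (EuclideanSpace.equiv (Fin d) ℝ).symm
                (fun i => 2 * R * (z.1 i : ℝ))‖ ^ 2
            + (a * ‖x‖ ^ 2 + P x) * χ (2 * ‖x‖ / R))) ≤ C := by
  obtain ⟨M, hM⟩ := hPc.exists_bound_of_continuous hP.continuous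
  set w : ℤ → ℝ := fun m => Real.exp (-(4 * a) * (|(m : ℝ)| * (|(m : ℝ)| - 1))) with hw_def
  have hw0 : ∀ m, 0 ≤ w m := fun m => (Real.exp_pos _).le
  -- `w` is summable
  have hwsum : Summable w := by
    have hgeo : Summable (fun n : ℕ => Real.exp (4 * a) * Real.exp (-a) ^ n) :=
      (summable_geometric_of_lt_one (Real.exp_nonneg _)
        (Real.exp_lt_one_iff.mpr (by linarith))).mul_left _
    have hle : ∀ m : ℤ, w m ≤ Real.exp (4 * a) * Real.exp (-a) ^ m.natAbs := by
      intro m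
      rw [hw_def, ← Real.exp_nat_mul, ← Real.exp_add]
      apply Real.exp_le_exp.mpr
      have hb : (m.natAbs : ℝ) = |(m : ℝ)| := by
        rw [Nat.cast_natAbs]; push_cast; ring
      rw [hb]
      have h01 : |(m : ℝ)| = 0 ∨ 1 ≤ |(m : ℝ)| := by
        rcases eq_or_ne m 0 with h | h
        · left; simp [h]
        · right
          have : (1 : ℤ) ≤ |m| := Int.one_le_abs (by simpa using h)
          calc (1 : ℝ) ≤ ((|m| : ℤ) : ℝ) := by exact_mod_cast this
            _ = |(m : ℝ)| := by push_cast; ring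
      rcases h01 with h | h
      · rw [h]; nlinarith
      · nlinarith [abs_nonneg (m : ℝ), mul_nonneg ha.le (sq_nonneg (|(m : ℝ)| - 1)),
          mul_nonneg ha.le (by linarith : (0 : ℝ) ≤ |(m : ℝ)| - 1)]
    exact Summable.of_nonneg_of_le hw0 hle
      (Summable.of_nat_of_neg (by simpa using hgeo) (by simpa using hgeo))
  have hWsum : Summable (fun z : Fin d → ℤ => ∏ i, w (z i)) :=
    summable_pi_prod_aux hwsum hw0 d
  refine ⟨2, ∑' z : {z : Fin d → ℤ // z ≠ 0}, Real.exp M * ∏ i, w (z.1 i), one_lt_two, ?_⟩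
  intro R hR
  have hR1 : (1 : ℝ) ≤ R := by linarith
  have hg : Summable (fun z : {z : Fin d → ℤ // z ≠ 0} => Real.exp M * ∏ i, w (z.1 i)) :=
    (hWsum.mul_left (Real.exp M)).subtype _
  -- the key pointwise bound
  have key : ∀ z : {z : Fin d → ℤ // z ≠ 0},
      (⨆ x ∈ {x : EuclideanSpace ℝ (Fin d) | ∀ i, |x i| ≤ R},
          Real.exp (-a * ‖x + (EuclideanSpace.equiv (Fin d) ℝ).symm
                (fun i => 2 * R * (z.1 i : ℝ))‖ ^ 2
            + (a * ‖x‖ ^ 2 + P x) * χ (2 * ‖x‖ / R)))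
        ≤ Real.exp M * ∏ i, w (z.1 i) := by
    intro z
    have hpos : 0 ≤ Real.exp M * ∏ i, w (z.1 i) :=
      mul_nonneg (Real.exp_pos _).le (Finset.prod_nonneg fun i _ => hw0 _)
    refine Real.iSup_le (fun x => Real.iSup_le (fun hx => ?_) hpos) hpos
    have hnormsq : ∀ y : EuclideanSpace ℝ (Fin d), ‖y‖ ^ 2 = ∑ i, (y i) ^ 2 := by
      intro y
      rw [EuclideanSpace.norm_eq,
        Real.sq_sqrt (Finset.sum_nonneg fun i _ => sq_nonneg _)]
      simp [Real.norm_eq_abs, sq_abs]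
    set v : EuclideanSpace ℝ (Fin d) :=
      (EuclideanSpace.equiv (Fin d) ℝ).symm (fun i => 2 * R * (z.1 i : ℝ)) with hv_def
    have hv : ∀ i, v i = 2 * R * (z.1 i : ℝ) := fun i => rfl
    set T : ℝ := ∑ i, |(z.1 i : ℝ)| * (|(z.1 i : ℝ)| - 1) with hT_def
    have hT0 : 0 ≤ T := by
      refine Finset.sum_nonneg fun i _ => ?_
      rcases eq_or_ne (z.1 i) 0 with h | h
      · simp [h]
      · have : (1 : ℝ) ≤ |(z.1 i : ℝ)| := by
          have : (1 : ℤ) ≤ |z.1 i| := Int.one_le_abs (by simpa using h)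
          calc (1 : ℝ) ≤ ((|z.1 i| : ℤ) : ℝ) := by exact_mod_cast this
            _ = |(z.1 i : ℝ)| := by push_cast; ring
        nlinarith
    -- coordinatewise bound
    have hcoord : ∀ i, 4 * R ^ 2 * (|(z.1 i : ℝ)| * (|(z.1 i : ℝ)| - 1))
        ≤ (x i + v i) ^ 2 - (x i) ^ 2 := by
      intro i
      have hxi : |x i| ≤ R := hx i
      have hxi' := abs_le.mp hxi
      set c : ℝ := (z.1 i : ℝ)
      have hc : -(|c| * R) ≤ c * x i := by
        have h1 : |c * x i| ≤ |c| * R := by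
          rw [abs_mul]
          exact mul_le_mul_of_nonneg_left hxi (abs_nonneg _)
        linarith [neg_abs_le (c * x i)]
      have hcR := mul_le_mul_of_nonneg_left hc (by linarith : (0 : ℝ) ≤ R)
      rw [hv]
      nlinarith [sq_abs c, abs_nonneg c]
    have hsum : 4 * R ^ 2 * T ≤ ∑ i, ((x i + v i) ^ 2 - (x i) ^ 2) := by
      rw [hT_def, Finset.mul_sum]
      exact Finset.sum_le_sum fun i _ => hcoord i
    have hxv : ‖x + v‖ ^ 2 - ‖x‖ ^ 2 = ∑ i, ((x i + v i) ^ 2 - (x i) ^ 2) := by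
      rw [hnormsq, hnormsq, ← Finset.sum_sub_distrib]
      congr 1
    -- cutoff bound
    obtain ⟨ht0, ht1⟩ := hχ01 (2 * ‖x‖ / R)
    have hPx : |P x| ≤ M := by simpa [Real.norm_eq_abs] using hM x
    have hU : (a * ‖x‖ ^ 2 + P x) * χ (2 * ‖x‖ / R) ≤ a * ‖x‖ ^ 2 + M := by
      have h1 : a * ‖x‖ ^ 2 * χ (2 * ‖x‖ / R) ≤ a * ‖x‖ ^ 2 := by
        have := mul_le_mul_of_nonneg_left ht1 (mul_nonneg ha.le (sq_nonneg ‖x‖))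
        linarith
      have h2 : P x * χ (2 * ‖x‖ / R) ≤ M := by
        nlinarith [le_abs_self (P x), abs_nonneg (P x),
          mul_le_mul_of_nonneg_right (le_abs_self (P x)) ht0,
          mul_le_mul_of_nonneg_right hPx ht0]
      nlinarith
    -- exponent bound
    have hexp : -a * ‖x + v‖ ^ 2 + (a * ‖x‖ ^ 2 + P x) * χ (2 * ‖x‖ / R)
        ≤ M + -(4 * a) * T := by
      have h3 : 4 * R ^ 2 * T ≤ ‖x + v‖ ^ 2 - ‖x‖ ^ 2 := by rw [hxv]; exact hsum
      have h4 : a * (4 * T) ≤ a * (4 * R ^ 2 * T) := by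
        nlinarith [mul_nonneg (mul_nonneg ha.le hT0) (by nlinarith : (0:ℝ) ≤ R ^ 2 - 1)]
      have h5 := mul_le_mul_of_nonneg_left h3 ha.le
      rw [mul_sub] at h5
      linarith
    calc Real.exp (-a * ‖x + v‖ ^ 2 + (a * ‖x‖ ^ 2 + P x) * χ (2 * ‖x‖ / R))
        ≤ Real.exp (M + -(4 * a) * T) := Real.exp_le_exp.mpr hexp
      _ = Real.exp M * ∏ i, w (z.1 i) := by
          rw [Real.exp_add, hT_def, Finset.mul_sum, Real.exp_sum]
  have hnn : ∀ z : {z : Fin d → ℤ // z ≠ 0},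
      0 ≤ ⨆ x ∈ {x : EuclideanSpace ℝ (Fin d) | ∀ i, |x i| ≤ R},
          Real.exp (-a * ‖x + (EuclideanSpace.equiv (Fin d) ℝ).symm
                (fun i => 2 * R * (z.1 i : ℝ))‖ ^ 2
            + (a * ‖x‖ ^ 2 + P x) * χ (2 * ‖x‖ / R)) :=
    fun z => Real.iSup_nonneg fun x => Real.iSup_nonneg fun _ => (Real.exp_pos _).le
  have hS := Summable.of_nonneg_of_le hnn key hg
  exact ⟨hS, Summable.tsum_le_tsum key hS hg⟩
end

section
/- Let a > 0, P ∈ C_0^∞(ℝ^d), U(x) := a|x|² + P(x), and let φ_R be as constructed from a smooth cutoff χ (χ = 1 on (-∞,1], 0 ≤ χ ≤ 1, χ = 0 on [2,∞), φ_R(x) := χ(2|x|/R)). Let Q_R := [-R,R]^d, and let U_R : ℝ^d → ℝ be the 2R-periodic extension of (U φ_R)|_{Q_R}. Then there exist R₀ > 1 and a constant C, both independent of R, such that for all R ≥ R₀ and every measurable u : ℝ^d → ℝ that is 2R-periodic (u(x + 2Rz) = u(x) for all z ∈ ℤ^d) with ∫_{Q_R} u(x)² e^{-U_R(x)} dx <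 ∞, one has ∫_{ℝ^d} u(x)² e^{-U(x)} dx ≤ C ∫_{Q_R} u(x)² e^{-U_R(x)} dx. -/
open MeasureTheory Real

private lemma tsum_pi_prod_aux (n : ℕ) (h : ℤ → ENNReal) :
    ∑' z : Fin n → ℤ, ∏ i, h (z i) = (∑' k : ℤ, h k) ^ n := by
  induction n with
  | zero =>
    rw [tsum_eq_single (fun i => Fin.elim0 i)
      (fun b hb => absurd (funext fun i => i.elim0) (Ne.symm hb))]
    simp
  | succ n ih =>
    calc (∑' z : Fin (n+1) → ℤ, ∏ i, h (z i))
        = ∑' p : ℤ × (Fin n → ℤ), ∏ i, h ((Fin.consEquiv fun _ => ℤ) p i) :=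
          ((Fin.consEquiv fun _ => ℤ).tsum_eq _).symm
      _ = ∑' p : ℤ × (Fin n → ℤ), h p.1 * ∏ i : Fin n, h (p.2 i) := by
          refine tsum_congr fun p => ?_
          rcases p with ⟨k, w⟩
          simp [Fin.consEquiv, Fin.prod_univ_succ]
      _ = ∑' k : ℤ, ∑' w : Fin n → ℤ, h k * ∏ i, h (w i) := ENNReal.tsum_prod'
      _ = (∑' k : ℤ, h k) * ∑' w : Fin n → ℤ, ∏ i, h (w i) := by
          simp_rw [ENNReal.tsum_mul_left]
          rw [ENNReal.tsum_mul_right]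
      _ = (∑' k : ℤ, h k) ^ (n+1) := by rw [ih]; ring

set_option maxHeartbeats 2000000 in
/-- With `U(x) = a|x|² + P(x)`, `P ∈ C₀^∞`, `φ_R(x) = χ(2|x|/R)` for a smooth cutoff `χ`,
`Q_R = [-R,R]^d`, and `U_R : ℝ^d → ℝ` the `2R`-periodic extension of `(U φ_R)|_{Q_R}`,
there exist `R₀ > 1` and `C` independent of `R` such that every `2R`-periodic
`u ∈ L²(e^{-U_R}dx; Q_R)` belongs to `L²(e^{-U}dx; ℝ^d)` with
`∫_{ℝ^d} u² e^{-U} dx ≤ C ∫_{Q_R} u² e^{-U_R} dx`. -/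
theorem periodic_L2_embedding (d : ℕ) (hd : 1 ≤ d) (a : ℝ) (ha : 0 < a)
    (P : EuclideanSpace ℝ (Fin d) → ℝ) (hP : ContDiff ℝ (⊤ : ℕ∞) P) (hPc : HasCompactSupport P)
    (χ : ℝ → ℝ) (hχ : ContDiff ℝ (⊤ : ℕ∞) χ) (hχ1 : ∀ r : ℝ, r ≤ 1 → χ r = 1)
    (hχ01 : ∀ r : ℝ, 0 ≤ χ r ∧ χ r ≤ 1) (hχ2 : ∀ r : ℝ, 2 ≤ r → χ r = 0) :
    ∃ R₀ C : ℝ, 1 < R₀ ∧ ∀ R, R₀ ≤ R →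
      ∀ UR : EuclideanSpace ℝ (Fin d) → ℝ,
        (∀ x : EuclideanSpace ℝ (Fin d), (∀ i, -R ≤ x i ∧ x i < R) →
          UR x = (a * ‖x‖ ^ 2 + P x) * χ (2 * ‖x‖ / R)) →
        (∀ (x : EuclideanSpace ℝ (Fin d)) (z : Fin d → ℤ),
          UR (x + (EuclideanSpace.equiv (Fin d) ℝ).symm (fun i => 2 * R * (z i : ℝ))) = UR x) →
      ∀ u : EuclideanSpace ℝ (Fin d) → ℝ, Measurable u →
        (∀ (x : EuclideanSpace ℝ (Fin d)) (z : Fin d → ℤ),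
          u (x + (EuclideanSpace.equiv (Fin d) ℝ).symm (fun i => 2 * R * (z i : ℝ))) = u x) →
        IntegrableOn (fun x => (u x) ^ 2 * Real.exp (-UR x))
          {x : EuclideanSpace ℝ (Fin d) | ∀ i, |x i| ≤ R} volume →
        Integrable
          (fun x : EuclideanSpace ℝ (Fin d) =>
            (u x) ^ 2 * Real.exp (-(a * ‖x‖ ^ 2 + P x))) volume ∧
        (∫ x : EuclideanSpace ℝ (Fin d), (u x) ^ 2 * Real.exp (-(a * ‖x‖ ^ 2 + P x)))
          ≤ C * ∫ x in {x : EuclideanSpace ℝ (Fin d) | ∀ i, |x i| ≤ R},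
                (u x) ^ 2 * Real.exp (-UR x) := by
  classical
  -- bound on P
  obtain ⟨M0, hM0⟩ := hP.continuous.bounded_above_of_compact_support hPc
  set M : ℝ := max M0 0 with hMdef
  have hM : ∀ x, |P x| ≤ M := fun x => le_trans (hM0 x) (le_max_left _ _)
  have hMnn : (0:ℝ) ≤ M := le_max_right _ _
  -- radius of support of P
  obtain ⟨r0, hr0⟩ := hPc.isBounded.subset_closedBall 0
  set r : ℝ := max r0 1 with hrdef
  have hr1 : (1:ℝ) ≤ r := le_max_right _ _
  have hPzero : ∀ y : EuclideanSpace ℝ (Fin d), r < ‖y‖ → P y = 0 := by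
    intro y hy
    apply image_eq_zero_of_notMem_tsupport
    intro hmem
    have h1 := hr0 hmem
    rw [Metric.mem_closedBall, dist_zero_right] at h1
    have : ‖y‖ ≤ r := h1.trans (le_max_left _ _)
    linarith
  -- summability of the Gaussian lattice sum
  have hnat : Summable (fun n : ℕ => Real.exp (-(a * (n:ℝ)^2))) := by
    have hgeo : Summable (fun n : ℕ => Real.exp (-a) ^ n) :=
      summable_geometric_of_lt_one (Real.exp_nonneg _) (Real.exp_lt_one_iff.2 (by linarith))
    refine hgeo.of_nonneg_of_le (fun n => (Real.exp_pos _).le) fun n => ?_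
    rw [← Real.exp_nat_mul]
    apply Real.exp_le_exp.2
    have h01 : (n:ℝ) = 0 ∨ 1 ≤ (n:ℝ) := by
      rcases Nat.eq_zero_or_pos n with h | h
      · left; simp [h]
      · right; exact_mod_cast h
    rcases h01 with h | h
    · rw [h]; norm_num
    · nlinarith [mul_nonneg ha.le (show (0:ℝ) ≤ (n:ℝ)^2 - n by nlinarith)]
  have hsumZ : Summable (fun k : ℤ => Real.exp (-(a * (k:ℝ)^2))) := by
    apply Summable.of_nat_of_neg
    · simpa using hnat
    · simpa using hnat
  -- the one-dimensional sum
  set S1 : ENNReal := ∑' k : ℤ, ENNReal.ofReal (Real.exp (-(a * (k:ℝ)^2))) with hS1def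
  have hS1 : S1 ≠ ⊤ := by
    rw [hS1def, ← ENNReal.ofReal_tsum_of_nonneg (fun k => (Real.exp_pos _).le) hsumZ]
    exact ENNReal.ofReal_ne_top
  -- the constants
  set c : (Fin d → ℤ) → ENNReal := fun z =>
    ENNReal.ofReal (Real.exp (M + a) * Real.exp (-(a * ∑ i, ((z i : ℝ))^2))) with hcdef
  have hc_eq : ∀ z, c z = ENNReal.ofReal (Real.exp (M + a)) *
      ∏ i, ENNReal.ofReal (Real.exp (-(a * ((z i : ℝ))^2))) := by
    intro z
    simp only [hcdef]
    rw [ENNReal.ofReal_mul (Real.exp_nonneg _)]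
    congr 1
    rw [← ENNReal.ofReal_prod_of_nonneg (fun i _ => (Real.exp_pos _).le), ← Real.exp_sum]
    congr 1
    rw [Finset.mul_sum, ← Finset.sum_neg_distrib]
  set S0 : ENNReal := ∑' z : Fin d → ℤ, c z with hS0def
  have hSsum : S0 = ENNReal.ofReal (Real.exp (M + a)) * S1 ^ d := by
    rw [hS0def]
    simp_rw [hc_eq]
    rw [ENNReal.tsum_mul_left, tsum_pi_prod_aux d (fun k => ENNReal.ofReal (Real.exp (-(a * (k:ℝ)^2))))]
  have hS0top : S0 ≠ ⊤ := by
    rw [hSsum]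
    exact ENNReal.mul_ne_top ENNReal.ofReal_ne_top (ENNReal.pow_ne_top hS1)
  refine ⟨r + 1, S0.toReal, by linarith, ?_⟩
  intro R hR UR hUReq hURper u hu huper hgint
  have hRr : r + 1 ≤ R := hR
  have hR2 : (2:ℝ) ≤ R := by linarith
  have hRpos : (0:ℝ) < R := by linarith
  -- the translation vectors
  set t : (Fin d → ℤ) → EuclideanSpace ℝ (Fin d) := fun z =>
    (EuclideanSpace.equiv (Fin d) ℝ).symm (fun i => 2 * R * (z i : ℝ)) with htdef
  have ht_apply : ∀ (z : Fin d → ℤ) (x : EuclideanSpace ℝ (Fin d)) (i : Fin d),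
      (x + t z) i = x i + 2 * R * (z i : ℝ) := fun z x i => rfl
  have huper' : ∀ (x : EuclideanSpace ℝ (Fin d)) (z : Fin d → ℤ), u (x + t z) = u x :=
    fun x z => huper x z
  -- the sets
  set Q : Set (EuclideanSpace ℝ (Fin d)) := {x | ∀ i, |x i| ≤ R} with hQdef
  set D : Set (EuclideanSpace ℝ (Fin d)) :=
    ⋂ i, (fun x : EuclideanSpace ℝ (Fin d) => x i) ⁻¹' Set.Ico (-R) R with hDdef
  set s : (Fin d → ℤ) → Set (EuclideanSpace ℝ (Fin d)) := fun z =>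
    ⋂ i, (fun x : EuclideanSpace ℝ (Fin d) => x i - 2 * R * (z i : ℝ)) ⁻¹' Set.Ico (-R) R
    with hsdef
  have hD_iff : ∀ x : EuclideanSpace ℝ (Fin d), x ∈ D ↔ ∀ i, -R ≤ x i ∧ x i < R := by
    intro x; simp [hDdef, Set.mem_iInter, Set.mem_Ico]
  have hs_iff : ∀ (z : Fin d → ℤ) (x : EuclideanSpace ℝ (Fin d)),
      x ∈ s z ↔ ∀ i, -R ≤ x i - 2 * R * (z i : ℝ) ∧ x i - 2 * R * (z i : ℝ) < R := by
    intro z x; simp [hsdef, Set.mem_iInter, Set.mem_Ico]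
  have hmeval : ∀ i, Measurable fun x : EuclideanSpace ℝ (Fin d) => x i :=
    fun i => (EuclideanSpace.proj (𝕜 := ℝ) i).continuous.measurable
  have hDmeas : MeasurableSet D :=
    MeasurableSet.iInter fun i => (hmeval i) measurableSet_Ico
  have hsmeas : ∀ z, MeasurableSet (s z) :=
    fun z => MeasurableSet.iInter fun i => ((hmeval i).sub_const _) measurableSet_Ico
  have hDQ : D ⊆ Q := by
    intro x hx i
    have := (hD_iff x).1 hx i
    exact abs_le.2 ⟨this.1, this.2.le⟩
  -- the cells cover everything
  have hcover : (⋃ z : Fin d → ℤ, s z) = Set.univ := by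
    ext x
    simp only [Set.mem_univ, iff_true, Set.mem_iUnion]
    refine ⟨fun i => ⌊(x i + R) / (2 * R)⌋, (hs_iff _ x).2 fun i => ?_⟩
    have h2R : (0:ℝ) < 2 * R := by linarith
    have h1 : ((⌊(x i + R) / (2 * R)⌋ : ℝ)) * (2 * R) ≤ x i + R := by
      rw [← le_div_iff₀ h2R]; exact Int.floor_le _
    have h2 : x i + R < ((⌊(x i + R) / (2 * R)⌋ : ℝ) + 1) * (2 * R) := by
      rw [← div_lt_iff₀ h2R]; exact Int.lt_floor_add_one _
    constructor <;> nlinarith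
  -- the cells are pairwise disjoint
  have hdisj : Pairwise (Function.onFun Disjoint s) := by
    intro z w hzw
    rw [Function.onFun, Set.disjoint_left]
    intro x hxz hxw
    apply hzw
    funext i
    have h1 := (hs_iff z x).1 hxz i
    have h2 := (hs_iff w x).1 hxw i
    have hlt : (↑(z i - w i) : ℝ) < 1 := by push_cast; nlinarith
    have hgt : (-1 : ℝ) < (↑(z i - w i) : ℝ) := by push_cast; nlinarith
    have hlt' : z i - w i < 1 := by exact_mod_cast hlt
    have hgt' : -1 < z i - w i := by exact_mod_cast hgt
    omega
  -- norms expressed coordinatewise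
  have hnorm_sq : ∀ y : EuclideanSpace ℝ (Fin d), ‖y‖^2 = ∑ i, (y i)^2 := by
    intro y
    rw [EuclideanSpace.norm_eq, Real.sq_sqrt (Finset.sum_nonneg fun i _ => sq_nonneg _)]
    simp [Real.norm_eq_abs, sq_abs]
  -- the key exponent inequality
  have hexp : ∀ (z : Fin d → ℤ) (x : EuclideanSpace ℝ (Fin d)), (∀ i, -R ≤ x i ∧ x i < R) →
      UR x + a * (∑ i, ((z i : ℝ))^2) ≤ (a * ‖x + t z‖^2 + P (x + t z)) + (M + a) := by
    intro z x hx
    have hURx := hUReq x hx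
    obtain ⟨hc0, hc1⟩ := hχ01 (2 * ‖x‖ / R)
    have hPx := abs_le.1 (hM x)
    by_cases hz : z = 0
    · subst hz
      have ht0 : t (0 : Fin d → ℤ) = 0 := by
        ext i
        show 2 * R * ((0:ℤ):ℝ) = 0
        norm_num
      rw [ht0, add_zero]
      have hsum0 : (∑ i, (((0 : Fin d → ℤ) i : ℝ))^2) = 0 := by simp
      rw [hsum0, mul_zero, add_zero]
      rw [hURx]
      set V := a * ‖x‖^2 + P x with hVdef
      have hV0 : -M ≤ V := by
        have : (0:ℝ) ≤ a * ‖x‖^2 := by positivity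
        rw [hVdef]; linarith [hPx.1]
      nlinarith [mul_nonneg (show (0:ℝ) ≤ V + M by linarith) (show (0:ℝ) ≤ 1 - χ (2 * ‖x‖ / R) by linarith),
        mul_nonneg hMnn hc0, ha.le]
    · -- z ≠ 0
      obtain ⟨i0, hi0⟩ : ∃ i, z i ≠ 0 := by
        by_contra h; push_neg at h; exact hz (funext h)
      set N : ℝ := ∑ i, ((z i : ℝ))^2 with hNdef
      have hN1 : (1:ℝ) ≤ N := by
        have h1 : (1:ℤ) ≤ |z i0| := Int.one_le_abs hi0
        have h2 : (1:ℝ) ≤ |(z i0 : ℝ)| := by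
          rw [← Int.cast_abs]
          exact_mod_cast h1
        have h3 : (1:ℝ) ≤ ((z i0 : ℝ))^2 := by nlinarith [sq_abs ((z i0 : ℝ))]
        exact h3.trans (Finset.single_le_sum (fun i _ => sq_nonneg ((z i : ℝ))) (Finset.mem_univ i0))
      have hcoord : ∀ i, R^2 * ((z i : ℝ))^2 ≤ (x i + 2 * R * (z i : ℝ))^2 := by
        intro i
        rcases eq_or_ne (z i) 0 with h | h
        · simp [h]; positivity
        · have h1 : (1:ℝ) ≤ |(z i : ℝ)| := by
            have : (1:ℤ) ≤ |z i| := Int.one_le_abs h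
            calc (1:ℝ) = ((1:ℤ):ℝ) := by norm_num
              _ ≤ ((|z i| : ℤ) : ℝ) := by exact_mod_cast this
              _ = |(z i : ℝ)| := by push_cast; ring
          have hxi : |x i| ≤ R := abs_le.2 ⟨(hx i).1, (hx i).2.le⟩
          have habs2 : |2 * R * (z i : ℝ)| = 2 * R * |(z i : ℝ)| := by
            rw [abs_mul, abs_of_pos (by linarith : (0:ℝ) < 2 * R)]
          have htri : |2 * R * (z i : ℝ)| ≤ |x i + 2 * R * (z i : ℝ)| + |x i| := by
            calc |2 * R * (z i : ℝ)| = |(x i + 2 * R * (z i : ℝ)) - x i| := by ring_nf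
              _ ≤ |x i + 2 * R * (z i : ℝ)| + |x i| := abs_sub _ _
          have habs : R * |(z i : ℝ)| ≤ |x i + 2 * R * (z i : ℝ)| := by
            rw [habs2] at htri; nlinarith
          have hsq := pow_le_pow_left₀ (by positivity) habs 2
          calc R^2 * ((z i : ℝ))^2 = (R * |(z i : ℝ)|)^2 := by rw [mul_pow, sq_abs]
            _ ≤ |x i + 2 * R * (z i : ℝ)|^2 := hsq
            _ = (x i + 2 * R * (z i : ℝ))^2 := sq_abs _
      have hy2 : R^2 * N ≤ ‖x + t z‖^2 := by
        rw [hnorm_sq (x + t z), hNdef, Finset.mul_sum]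
        refine Finset.sum_le_sum fun i _ => ?_
        rw [ht_apply z x i]
        exact hcoord i
      have hPy : P (x + t z) = 0 := by
        apply hPzero
        have h1 : r^2 < ‖x + t z‖^2 := by nlinarith
        nlinarith [norm_nonneg (x + t z)]
      rw [hPy, hURx]
      have hkey : a * R^2 * N + a ≥ a * R^2 + a * N := by
        nlinarith [mul_nonneg (mul_nonneg ha.le (show (0:ℝ) ≤ R^2 - 1 by nlinarith))
          (show (0:ℝ) ≤ N - 1 by linarith)]
      have hay : a * R^2 * N ≤ a * ‖x + t z‖^2 := by nlinarith [ha.le]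
      by_cases hc : χ (2 * ‖x‖ / R) = 0
      · rw [hc, mul_zero]
        nlinarith
      · have hxR : ‖x‖ ≤ R := by
          by_contra hcon
          push_neg at hcon
          exact hc (hχ2 _ (by rw [le_div_iff₀ hRpos]; linarith))
        have hV : a * ‖x‖^2 + P x ≤ a * R^2 + M := by
          have hsq : ‖x‖^2 ≤ R^2 := by nlinarith [norm_nonneg x]
          nlinarith [mul_le_mul_of_nonneg_left hsq ha.le, hPx.2]
        have haRM : (0:ℝ) ≤ a * R^2 + M := by positivity
        have h2 : (a * ‖x‖^2 + P x) * χ (2 * ‖x‖ / R) ≤ a * R^2 + M := by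
          nlinarith [mul_nonneg haRM (show (0:ℝ) ≤ 1 - χ (2 * ‖x‖ / R) by linarith),
            mul_nonneg (show (0:ℝ) ≤ a * R^2 + M - (a * ‖x‖^2 + P x) by linarith) hc0]
        linarith
  -- the functions
  set F : EuclideanSpace ℝ (Fin d) → ℝ :=
    fun x => (u x)^2 * Real.exp (-(a * ‖x‖^2 + P x)) with hFdef
  set g : EuclideanSpace ℝ (Fin d) → ℝ := fun x => (u x)^2 * Real.exp (-UR x) with hgdef
  have hFmeas : Measurable F := by
    apply (hu.pow_const 2).mul
    exact (Real.continuous_exp.comp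
      (((continuous_const.mul (continuous_norm.pow 2)).add hP.continuous).neg)).measurable
  -- the pointwise bound
  have hptwise : ∀ (z : Fin d → ℤ) (x : EuclideanSpace ℝ (Fin d)), (∀ i, -R ≤ x i ∧ x i < R) →
      ENNReal.ofReal (F (x + t z)) ≤ c z * ENNReal.ofReal (g x) := by
    intro z x hx
    simp only [hFdef, hgdef, hcdef]
    rw [huper' x z]
    rw [← ENNReal.ofReal_mul (by positivity)]
    apply ENNReal.ofReal_le_ofReal
    have hE := hexp z x hx
    have hle : Real.exp (-(a * ‖x + t z‖^2 + P (x + t z))) ≤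
        Real.exp (M + a) * Real.exp (-(a * ∑ i, ((z i : ℝ))^2)) * Real.exp (-UR x) := by
      rw [← Real.exp_add, ← Real.exp_add]
      exact Real.exp_le_exp.2 (by linarith)
    calc (u x)^2 * Real.exp (-(a * ‖x + t z‖^2 + P (x + t z)))
        ≤ (u x)^2 * (Real.exp (M + a) * Real.exp (-(a * ∑ i, ((z i : ℝ))^2)) *
            Real.exp (-UR x)) := mul_le_mul_of_nonneg_left hle (sq_nonneg _)
      _ = Real.exp (M + a) * Real.exp (-(a * ∑ i, ((z i : ℝ))^2)) *
            ((u x)^2 * Real.exp (-UR x)) := by ring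
  -- change of variables on each cell
  have key1 : ∀ z : Fin d → ℤ, ∫⁻ x in s z, ENNReal.ofReal (F x) =
      ∫⁻ x in D, ENNReal.ofReal (F (x + t z)) := by
    intro z
    have hemb : MeasurableEmbedding (fun x : EuclideanSpace ℝ (Fin d) => x + t z) :=
      (MeasurableEquiv.addRight (t z)).measurableEmbedding
    have hmp : MeasurePreserving (fun x : EuclideanSpace ℝ (Fin d) => x + t z) volume volume :=
      measurePreserving_add_right volume (t z)
    have h := hmp.setLIntegral_comp_preimage_emb hemb (fun x => ENNReal.ofReal (F x)) (s z)
    have hset : (fun x : EuclideanSpace ℝ (Fin d) => x + t z) ⁻¹' (s z) = D := by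
      ext x
      rw [Set.mem_preimage, hs_iff z, hD_iff x]
      constructor
      · intro hmem i
        have := hmem i
        rw [ht_apply z x i] at this
        constructor <;> linarith [this.1, this.2]
      · intro hmem i
        rw [ht_apply z x i]
        constructor <;> linarith [(hmem i).1, (hmem i).2]
    rw [← h, hset]
  -- the integral over Q of g
  have hgnn : ∀ x, 0 ≤ g x := fun x => by rw [hgdef]; positivity
  have hI : ENNReal.ofReal (∫ x in Q, g x) = ∫⁻ x in Q, ENNReal.ofReal (g x) :=
    ofReal_integral_eq_lintegral_ofReal hgint (Filter.Eventually.of_forall hgnn)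
  have hIne : (∫⁻ x in Q, ENNReal.ofReal (g x)) ≠ ⊤ := by
    rw [← hI]; exact ENNReal.ofReal_ne_top
  -- the main estimate
  have hmain : ∫⁻ x, ENNReal.ofReal (F x) ≤ S0 * ∫⁻ x in Q, ENNReal.ofReal (g x) := by
    calc ∫⁻ x, ENNReal.ofReal (F x)
        = ∫⁻ x in ⋃ z : Fin d → ℤ, s z, ENNReal.ofReal (F x) := by
          rw [hcover, Measure.restrict_univ]
      _ = ∑' z : Fin d → ℤ, ∫⁻ x in s z, ENNReal.ofReal (F x) :=
          lintegral_iUnion hsmeas hdisj _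
      _ ≤ ∑' z : Fin d → ℤ, c z * ∫⁻ x in Q, ENNReal.ofReal (g x) := by
          refine ENNReal.tsum_le_tsum fun z => ?_
          rw [key1 z]
          calc ∫⁻ x in D, ENNReal.ofReal (F (x + t z))
              ≤ ∫⁻ x in D, c z * ENNReal.ofReal (g x) := by
                refine lintegral_mono_ae (ae_restrict_of_forall_mem hDmeas fun x hx =>
                  hptwise z x ((hD_iff x).1 hx))
            _ = c z * ∫⁻ x in D, ENNReal.ofReal (g x) :=
                lintegral_const_mul' _ _ ENNReal.ofReal_ne_top
            _ ≤ c z * ∫⁻ x in Q, ENNReal.ofReal (g x) :=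
                mul_le_mul_right (lintegral_mono_set hDQ) _
      _ = S0 * ∫⁻ x in Q, ENNReal.ofReal (g x) := by
          rw [hS0def, ENNReal.tsum_mul_right]
  have hfin : ∫⁻ x, ENNReal.ofReal (F x) < ⊤ :=
    lt_of_le_of_lt hmain (ENNReal.mul_lt_top hS0top.lt_top hIne.lt_top)
  have hFnn : ∀ x, 0 ≤ F x := fun x => by rw [hFdef]; positivity
  have hFint : Integrable F volume := by
    refine ⟨hFmeas.aestronglyMeasurable, ?_⟩
    rw [hasFiniteIntegral_iff_ofReal (Filter.Eventually.of_forall hFnn)]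
    exact hfin
  refine ⟨hFint, ?_⟩
  have heq : ∫ x, F x = (∫⁻ x, ENNReal.ofReal (F x)).toReal :=
    integral_eq_lintegral_of_nonneg_ae (Filter.Eventually.of_forall hFnn)
      hFmeas.aestronglyMeasurable
  have hJnn : 0 ≤ ∫ x in Q, g x := integral_nonneg hgnn
  calc ∫ x, F x = (∫⁻ x, ENNReal.ofReal (F x)).toReal := heq
    _ ≤ (S0 * ENNReal.ofReal (∫ x in Q, g x)).toReal := by
        apply ENNReal.toReal_mono
        · exact ENNReal.mul_ne_top hS0top ENNReal.ofReal_ne_top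
        · rw [hI]; exact hmain
    _ = S0.toReal * ∫ x in Q, g x := by
        rw [ENNReal.toReal_mul, ENNReal.toReal_ofReal hJnn]
end
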